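/- arXiv:1406.4345 — 2 statements merged into one kernel-verified Lean document; each statement's English description precedes it below -/
import Mathlib

section
/- Let X be a nonempty set and let H : X* → X ∪ {ε} be an associative and arity-wise quasi-range-idempotent ε-standard operation. Then any ε-standard operation F : X* → X ∪ {ε} such that, for every n ≥ 1, F_n = g_n ∘ H_n for some quasi-inverse g_n of δ_{H_n}, is B-associative. -/
/-- `RepStr F y` is the string `F(y)^{|y|}`: `|y|` copies of `F y` if `F y ∈ X`,
and the empty string if `F y = ε` (here `ε` is encoded by `none`). -/
def RepStr {X : Type*} (F : List X → Option X) (y : List X) : List X :=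
  match F y with
  | some a => List.replicate y.length a
  | none => []

/-- `F` is barycentrically associative. -/
def BAssoc {X : Type*} (F : List X → Option X) : Prop :=
  ∀ x y z : List X, F (x ++ y ++ z) = F (x ++ RepStr F y ++ z)

/-- `F` is ε-standard: `F x = ε` iff `x = ε`. -/
def EpsStd {X : Type*} (F : List X → Option X) : Prop :=
  ∀ x : List X, F x = none ↔ x = []

/-- `F` is barycentrically preassociative. -/
def BPreassoc {X Y : Type*} (F : List X → Y) : Prop :=
  ∀ x y y' z : List X, y.length = y'.length → F y = F y' →
    F (x ++ y ++ z) = F (x ++ y' ++ z)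

/-- `F` is arity-wise range-idempotent: `F (F(x)^{|x|}) = F x`. -/
def AWRI {X : Type*} (F : List X → Option X) : Prop :=
  ∀ x : List X, F (RepStr F x) = F x

/-- `F` is arity-wise quasi-range-idempotent: `ran δ_{F_n} = ran F_n` for all `n ≥ 1`. -/
def AWQRI {X Y : Type*} (F : List X → Y) : Prop :=
  ∀ n : ℕ, 1 ≤ n →
    Set.range (fun u : X => F (List.replicate n u)) = F '' {l : List X | l.length = n}

/-- `g` is a quasi-inverse of `f`: `f (g b) = b` for every `b ∈ ran f`, and
`g (ran f) = ran g`. -/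
def QuasiInv {α β : Type*} (f : α → β) (g : β → α) : Prop :=
  (∀ b ∈ Set.range f, f (g b) = b) ∧ g '' Set.range f = Set.range g

/-
Associativity makes `H (x y z)` depend on `y` only through `H y`. Quasi-range idempotence puts
`H y` in `ran δ_{H_n}`, where `δ_{H_n} ∘ g_n = id`, so `F(y)^{|y|} = g_n(H y)^n` has the same
`H`-value as `y`. As `F` is computed on each arity from `H` alone, replacing `y` by
`F(y)^{|y|}` changes neither the arity nor the `H`-value, hence not `F`.
-/

section

variable {X : Type*}

theorem repStr_nil (F : List X → Option X) : RepStr F [] = [] := by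
  unfold RepStr
  split <;> rfl

theorem repStr_of_eq_some {F : List X → Option X} {y : List X} {a : X} (h : F y = some a) :
    RepStr F y = List.replicate y.length a := by
  simp only [RepStr, h]

theorem apply_append_congr_of_assoc {H : List X → Option X}
    (hassoc : ∀ x y z : List X, H (x ++ y ++ z) = H (x ++ (H y).toList ++ z))
    (x z : List X) {y y' : List X} (h : H y = H y') :
    H (x ++ y ++ z) = H (x ++ y' ++ z) := by
  rw [hassoc, h, ← hassoc]

theorem apply_replicate_quasiInv_apply {H : List X → Option X} (hqri : AWQRI H) {n : ℕ}
    (hn : 1 ≤ n) {g : Option X → X} (hg : QuasiInv (fun u : X => H (List.replicate n u)) g)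
    {y : List X} (hy : y.length = n) :
    H (List.replicate n (g (H y))) = H y :=
  hg.1 _ (by rw [hqri n hn]; exact ⟨y, hy, rfl⟩)

theorem eq_of_length_eq_of_apply_eq {H F : List X → Option X}
    (hcomp : ∀ n : ℕ, 1 ≤ n → ∃ g : Option X → X,
      ∀ l : List X, l.length = n → F l = some (g (H l)))
    {l l' : List X} (hl : l ≠ []) (hlen : l.length = l'.length) (hH : H l = H l') :
    F l = F l' := by
  obtain ⟨g, hgF⟩ := hcomp l.length (List.length_pos_iff.mpr hl)
  rw [hgF l rfl, hgF l' hlen.symm, hH]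

end

theorem stmt_10_general {X : Type*} (H F : List X → Option X)
    (hassoc : ∀ x y z : List X, H (x ++ y ++ z) = H (x ++ (H y).toList ++ z))
    (hqri : AWQRI H)
    (hcomp : ∀ n : ℕ, 1 ≤ n → ∃ g : Option X → X,
      QuasiInv (fun u : X => H (List.replicate n u)) g ∧
      ∀ l : List X, l.length = n → F l = some (g (H l))) :
    BAssoc F := by
  intro x y z
  rcases eq_or_ne y [] with rfl | hy
  · rw [repStr_nil]
  have hn : 1 ≤ y.length := List.length_pos_iff.mpr hy
  obtain ⟨g, hg, hgF⟩ := hcomp y.length hn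
  have hrep : RepStr F y = List.replicate y.length (g (H y)) := repStr_of_eq_some (hgF y rfl)
  refine eq_of_length_eq_of_apply_eq (fun m hm ↦ (hcomp m hm).imp fun _ ↦ And.right)
    (by simp [hy]) (by simp [hrep]) ?_
  rw [hrep]
  exact apply_append_congr_of_assoc hassoc x z
    (apply_replicate_quasiInv_apply hqri hn hg rfl).symm

/-- If `H` is an associative, arity-wise quasi-range-idempotent,
ε-standard operation, then every ε-standard operation `F` with
`F_n = g_n ∘ H_n` for some quasi-inverse `g_n` of `δ_{H_n}` (for each `n ≥ 1`)
is B-associative.  (Associativity: `F (xyz) = F (x F(y) z)`, where `F y` is a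
one-letter string if `F y ∈ X` and `ε` otherwise, via `Option.toList`.) -/
theorem stmt_10 {X : Type*} [Nonempty X] (H F : List X → Option X)
    (hassoc : ∀ x y z : List X, H (x ++ y ++ z) = H (x ++ (H y).toList ++ z))
    (hqri : AWQRI H) (hHs : EpsStd H) (hFs : EpsStd F)
    (hcomp : ∀ n : ℕ, 1 ≤ n → ∃ g : Option X → X,
      QuasiInv (fun u : X => H (List.replicate n u)) g ∧
      ∀ l : List X, l.length = n → F l = some (g (H l))) :
    BAssoc F :=
  stmt_10_general H F hassoc hqri hcomp
end

section
/- Let X and Y be nonempty sets and let F : X* → Y be a function. The following assertions are equivalent: (i) F is B-preassociative and arity-wise quasi-range-idempotent; (ii) there exist a B-associative ε-standard operation H : X* → X ∪ {ε} and, for each n ≥ 1, an injective function f_n : ran(H_n) → Y, such that F_n = f_n ∘ H_n for every n ≥ 1. Moreover, if condition (ii) holds, then F_n = δ_{F_n} ∘ H_n and f_n = δ_{F_n}|_{ran(H_n)} for every n ≥ 1. -/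
/-!
For (ii) ⇒ (i): B-associativity of `H` makes `H` B-preassociative, and injectivity of each
`f_n` transfers equalities of `F` on strings of equal length back to equalities of `H`, so `F`
inherits B-preassociativity. Since `H(H(x)^{|x|}) = H(x)`, also `F x = F(H(x)^{|x|})`, which
gives quasi-range-idempotence and the formulas for `F_n` and `f_n`.

For (i) ⇒ (ii): let `H x` be some `u` with `F(u^{|x|}) = F x`, which exists by
quasi-range-idempotence. Then `H x` depends only on `|x|` and `F x`, so B-preassociativity of
`F` yields B-associativity of `H`, and `f_n = δ_{F_n}` is injective on `ran H_n`.
-/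

open List

section Operations

variable {X : Type*} {H : List X → Option X} {l : List X} {a : X}

theorem repStr_of_eq_some_s15 (h : H l = some a) : RepStr H l = replicate l.length a := by
  simp [RepStr, h]

theorem EpsStd.exists_eq_some (hE : EpsStd H) (hl : l ≠ []) : ∃ a, H l = some a :=
  Option.ne_none_iff_exists'.mp (mt (hE l).mp hl)

theorem BAssoc.apply_replicate (hB : BAssoc H) (h : H l = some a) :
    H (replicate l.length a) = some a := by
  simpa [← repStr_of_eq_some_s15 h, h] using (hB [] l []).symm

theorem BAssoc.bPreassoc (hB : BAssoc H) : BPreassoc H := by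
  intro x y y' z hlen hy
  rw [hB x y z, hB x y' z]
  simp only [RepStr, hy, hlen]

end Operations

section Factorization

variable {X Y : Type*} {F : List X → Y} {H : List X → Option X} {f : ℕ → X → Y}

def FactorsInjectively (F : List X → Y) (H : List X → Option X) (f : ℕ → X → Y) : Prop :=
  ∀ n : ℕ, 1 ≤ n →
    Set.InjOn (f n) {a : X | ∃ l : List X, l.length = n ∧ H l = some a} ∧
    ∀ l : List X, l.length = n → ∀ a : X, H l = some a → F l = f n a

theorem eq_apply_replicate_of_factor {n : ℕ} {l : List X} {a : X} (hB : BAssoc H)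
    (hf : ∀ l : List X, l.length = n → ∀ a : X, H l = some a → F l = f n a)
    (hl : l.length = n) (ha : H l = some a) : f n a = F (replicate n a) := by
  subst hl
  exact (hf _ length_replicate a (hB.apply_replicate ha)).symm

namespace FactorsInjectively

theorem apply_eq_of_op_eq (hE : EpsStd H) (hf : FactorsInjectively F H f) {l l' : List X}
    (hlen : l.length = l'.length) (hH : H l = H l') : F l = F l' := by
  rcases eq_or_ne l [] with rfl | hl
  · rw [length_eq_zero_iff.mp hlen.symm]
  obtain ⟨a, ha⟩ := hE.exists_eq_some hl
  have hn : 1 ≤ l.length := length_pos_iff.mpr hl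
  rw [(hf _ hn).2 l rfl a ha, (hf _ hn).2 l' hlen.symm a (hH ▸ ha)]

theorem op_eq_of_apply_eq (hE : EpsStd H) (hf : FactorsInjectively F H f) {l l' : List X}
    (hlen : l.length = l'.length) (hF : F l = F l') : H l = H l' := by
  rcases eq_or_ne l [] with rfl | hl
  · rw [length_eq_zero_iff.mp hlen.symm]
  obtain ⟨a, ha⟩ := hE.exists_eq_some hl
  obtain ⟨b, hb⟩ := hE.exists_eq_some (ne_nil_of_length_pos (hlen ▸ length_pos_iff.mpr hl))
  have hn : 1 ≤ l.length := length_pos_iff.mpr hl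
  have hab : a = b := (hf _ hn).1 ⟨l, rfl, ha⟩ ⟨l', hlen.symm, hb⟩ <| by
    rw [← (hf _ hn).2 l rfl a ha, ← (hf _ hn).2 l' hlen.symm b hb, hF]
  rw [ha, hb, hab]

theorem bPreassoc (hB : BAssoc H) (hE : EpsStd H) (hf : FactorsInjectively F H f) :
    BPreassoc F := fun x y y' z hlen hF =>
  hf.apply_eq_of_op_eq hE (by simp [hlen])
    (hB.bPreassoc x y y' z hlen (hf.op_eq_of_apply_eq hE hlen hF))

theorem awqri (hB : BAssoc H) (hE : EpsStd H) (hf : FactorsInjectively F H f) : AWQRI F := by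
  intro n hn
  refine subset_antisymm ?_ ?_
  · rintro _ ⟨u, rfl⟩
    exact ⟨replicate n u, length_replicate, rfl⟩
  · rintro _ ⟨l, hl : l.length = n, rfl⟩
    obtain ⟨a, ha⟩ := hE.exists_eq_some (ne_nil_of_length_pos (by omega : 0 < l.length))
    refine ⟨a, ?_⟩
    change F (replicate n a) = F l
    rw [← eq_apply_replicate_of_factor hB (hf n hn).2 hl ha, (hf n hn).2 l hl a ha]

end FactorsInjectively

end Factorization

section DiagonalRep

variable {X Y : Type*} [Nonempty X] {F : List X → Y} {l l' : List X} {a : X}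

/-- `δ_{F_n}⁻¹ ∘ F_n` on strings of length `n ≥ 1`, for a right inverse of `δ_{F_n}`. -/
noncomputable def diagonalRep (F : List X → Y) (l : List X) : Option X :=
  if l = [] then none else some (Classical.epsilon fun u => F (replicate l.length u) = F l)

theorem epsStd_diagonalRep : EpsStd (diagonalRep F) := by
  intro l
  by_cases hl : l = [] <;> simp [diagonalRep, hl]

theorem diagonalRep_congr (hlen : l.length = l'.length) (hF : F l = F l') :
    diagonalRep F l = diagonalRep F l' := by
  simp only [diagonalRep, ← length_eq_zero_iff, hlen, hF]

theorem AWQRI.apply_replicate_diagonalRep (hQ : AWQRI F) (h : diagonalRep F l = some a) :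
    F (replicate l.length a) = F l := by
  have hl : l ≠ [] := by rintro rfl; simp [diagonalRep] at h
  have hex : ∃ u, F (replicate l.length u) = F l := by
    rw [← Set.mem_range, hQ _ (length_pos_iff.mpr hl)]
    exact ⟨l, rfl, rfl⟩
  simp only [diagonalRep, if_neg hl, Option.some.injEq] at h
  exact h ▸ Classical.epsilon_spec hex

theorem BPreassoc.bAssoc_diagonalRep (hP : BPreassoc F) (hQ : AWQRI F) :
    BAssoc (diagonalRep F) := by
  intro x y z
  rcases eq_or_ne y [] with rfl | hy
  · simp [RepStr, diagonalRep]
  obtain ⟨a, ha⟩ := epsStd_diagonalRep.exists_eq_some hy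
  rw [repStr_of_eq_some_s15 ha]
  exact diagonalRep_congr (by simp)
    (hP x y _ z length_replicate.symm (hQ.apply_replicate_diagonalRep ha).symm)

theorem AWQRI.factorsInjectively_diagonalRep (hQ : AWQRI F) :
    FactorsInjectively F (diagonalRep F) fun n a => F (replicate n a) := by
  refine fun n _ => ⟨?_, fun l hl a ha => ?_⟩
  · rintro a ⟨l, rfl, ha⟩ b ⟨l', hl', hb⟩ hab
    have hF : F l = F l' := by
      rw [← hQ.apply_replicate_diagonalRep ha, ← hQ.apply_replicate_diagonalRep hb, hl']
      exact hab
    exact Option.some_injective X (ha ▸ hb ▸ diagonalRep_congr hl'.symm hF)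
  · exact hl ▸ (hQ.apply_replicate_diagonalRep ha).symm

end DiagonalRep

theorem stmt_15_general {X Y : Type*} [Nonempty X] (F : List X → Y) :
    ((BPreassoc F ∧ AWQRI F) ↔
      (∃ H : List X → Option X, BAssoc H ∧ EpsStd H ∧
        ∃ f : ℕ → X → Y, ∀ n : ℕ, 1 ≤ n →
          Set.InjOn (f n) {a : X | ∃ l : List X, l.length = n ∧ H l = some a} ∧
          ∀ l : List X, l.length = n → ∀ a : X, H l = some a → F l = f n a)) ∧
    (∀ (H : List X → Option X) (f : ℕ → X → Y),
      BAssoc H → EpsStd H →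
      (∀ n : ℕ, 1 ≤ n →
        Set.InjOn (f n) {a : X | ∃ l : List X, l.length = n ∧ H l = some a} ∧
        ∀ l : List X, l.length = n → ∀ a : X, H l = some a → F l = f n a) →
      ∀ n : ℕ, 1 ≤ n →
        (∀ l : List X, l.length = n → ∀ a : X, H l = some a →
          F l = F (List.replicate n a)) ∧
        (∀ a ∈ {a : X | ∃ l : List X, l.length = n ∧ H l = some a},
          f n a = F (List.replicate n a))) := by
  refine ⟨⟨fun ⟨hP, hQ⟩ => ?_, fun ⟨H, hB, hE, f, hf⟩ => ?_⟩,
    fun H f hB _ hf n hn => ?_⟩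
  · exact ⟨diagonalRep F, hP.bAssoc_diagonalRep hQ, epsStd_diagonalRep, _,
      hQ.factorsInjectively_diagonalRep⟩
  · exact ⟨FactorsInjectively.bPreassoc hB hE hf, FactorsInjectively.awqri hB hE hf⟩
  · have hdiag {l a} := eq_apply_replicate_of_factor (l := l) (a := a) hB (hf n hn).2
    refine ⟨fun l hl a ha => ?_, fun a ⟨l, hl, ha⟩ => hdiag hl ha⟩
    rw [(hf n hn).2 l hl a ha, hdiag hl ha]

/-- `F : X* → Y` is B-preassociative and arity-wise
quasi-range-idempotent iff there are a B-associative ε-standard operation `H`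
and injective functions `f_n : ran H_n → Y` with `F_n = f_n ∘ H_n` for every
`n ≥ 1`.  Moreover, in that case `F_n = δ_{F_n} ∘ H_n` and
`f_n = δ_{F_n}|_{ran H_n}`. -/
theorem stmt_15 {X Y : Type*} [Nonempty X] [Nonempty Y] (F : List X → Y) :
    ((BPreassoc F ∧ AWQRI F) ↔
      (∃ H : List X → Option X, BAssoc H ∧ EpsStd H ∧
        ∃ f : ℕ → X → Y, ∀ n : ℕ, 1 ≤ n →
          Set.InjOn (f n) {a : X | ∃ l : List X, l.length = n ∧ H l = some a} ∧
          ∀ l : List X, l.length = n → ∀ a : X, H l = some a → F l = f n a)) ∧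
    (∀ (H : List X → Option X) (f : ℕ → X → Y),
      BAssoc H → EpsStd H →
      (∀ n : ℕ, 1 ≤ n →
        Set.InjOn (f n) {a : X | ∃ l : List X, l.length = n ∧ H l = some a} ∧
        ∀ l : List X, l.length = n → ∀ a : X, H l = some a → F l = f n a) →
      ∀ n : ℕ, 1 ≤ n →
        (∀ l : List X, l.length = n → ∀ a : X, H l = some a →
          F l = F (List.replicate n a)) ∧
        (∀ a ∈ {a : X | ∃ l : List X, l.length = n ∧ H l = some a},
          f n a = F (List.replicate n a))) :=
  stmt_15_general F
end
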